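/- (Performance difference via greedy advantage.) For any two policies π, π' in an infinite-horizon discounted MDP: v^{π'} - v^{π} = Σ_{t=1}^∞ γ^{t-1} E_{(s,a)∼d_t^{π}}[Q^{π'}(s, π'(s)) - Q^{π'}(s,a)], where d_t^π is the state-action distribution at time t under π starting from d₀. -/

import Mathlib

open Finset

/-- One step of the state-action distribution dynamics under policy `π`. -/
noncomputable def stepDist {S A : Type*} [Fintype S] [Fintype A] [DecidableEq A]
    (P : S → A → S → ℝ) (π : S → A) (ν : S → A → ℝ) : S → A → ℝ :=
  fun s' a' => if a' = π s' then ∑ s, ∑ a, ν s a * P s a s' else 0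

/-- Point mass at the state-action pair `(s0, a0)`. -/
noncomputable def pointMass {S A : Type*} [DecidableEq S] [DecidableEq A]
    (s0 : S) (a0 : A) : S → A → ℝ :=
  fun s a => if s = s0 ∧ a = a0 then 1 else 0

/-- `Qpi P Rbar γ π s0 a0` is Q^π(s0,a0). -/
noncomputable def Qpi {S A : Type*} [Fintype S] [Fintype A] [DecidableEq S] [DecidableEq A]
    (P : S → A → S → ℝ) (Rbar : S → A → ℝ) (γ : ℝ) (π : S → A) (s0 : S) (a0 : A) : ℝ :=
  ∑' t : ℕ, γ ^ t *
    ∑ s, ∑ a, ((stepDist P π)^[t] (pointMass s0 a0)) s a * Rbar s a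

/-- Initial state-action distribution `d₁ = d₀ × π`. -/
noncomputable def initDist {S A : Type*} [DecidableEq A]
    (d0 : S → ℝ) (π : S → A) : S → A → ℝ :=
  fun s a => if a = π s then d0 s else 0

/-- `vpi` is the expected discounted return of policy `π` from `d₀`. -/
noncomputable def vpi {S A : Type*} [Fintype S] [Fintype A] [DecidableEq A]
    (P : S → A → S → ℝ) (Rbar : S → A → ℝ) (γ : ℝ) (d0 : S → ℝ) (π : S → A) : ℝ :=
  ∑' t : ℕ, γ ^ t * ∑ s, ∑ a, ((stepDist P π)^[t] (initDist d0 π)) s a * Rbar s a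

/-! Write `ν_t` for the state-action distribution of `π` at time `t`, `⟨μ, g⟩` for
`∑ s, ∑ a, μ s a * g s a`, and `V' s = Q^{π'}(s, π' s)`. Averaging the Bellman equation
`Q^{π'}(s, a) = R(s, a) + γ ∑ s', P(s, a, s') V'(s')` against `ν_t` gives
`⟨ν_t, Q^{π'}⟩ = ⟨ν_t, R⟩ + γ ⟨ν_{t+1}, V'⟩`, so with `u_t = γ^t ⟨ν_t, V'⟩` the `t`-th term of the
series is `u_t - u_{t+1} - γ^t ⟨ν_t, R⟩`. The series therefore telescopes to
`u_0 - v^π = v^{π'} - v^π`. All series converge because a stochastic `P` does not increase the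
ℓ¹ norm of a signed measure, so every term is `O(γ^t)`. -/

lemma tsum_sub_succ {u : ℕ → ℝ} (hu : Summable u) : ∑' t, (u t - u (t + 1)) = u 0 := by
  rw [hu.tsum_sub ((summable_nat_add_iff 1).mpr hu), hu.tsum_eq_zero_add, add_sub_cancel_right]

section
variable {S A : Type*} [Fintype S] [Fintype A]

def IsStochastic (P : S → A → S → ℝ) : Prop :=
  ∀ s a, (∀ s', 0 ≤ P s a s') ∧ ∑ s', P s a s' = 1

lemma abs_sum_mul_le (μ g : S → A → ℝ) :
    |∑ s, ∑ a, μ s a * g s a| ≤ (∑ s, ∑ a, |μ s a|) * ‖g‖ := by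
  simp only [sum_mul]
  refine (abs_sum_le_sum_abs _ _).trans (sum_le_sum fun s _ => ?_)
  refine (abs_sum_le_sum_abs _ _).trans (sum_le_sum fun a _ => ?_)
  rw [abs_mul]
  exact mul_le_mul_of_nonneg_left ((norm_le_pi_norm (g s) a).trans (norm_le_pi_norm g s))
    (abs_nonneg _)

variable [DecidableEq A]

lemma sum_stepDist_mul (P : S → A → S → ℝ) (π : S → A) (μ g : S → A → ℝ) :
    ∑ s', ∑ a', stepDist P π μ s' a' * g s' a'
      = ∑ s', (∑ s, ∑ a, μ s a * P s a s') * g s' (π s') := by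
  simp [stepDist, ite_mul, sum_ite_eq']

lemma sum_abs_stepDist_le {P : S → A → S → ℝ} (hP : IsStochastic P) (π : S → A)
    (μ : S → A → ℝ) :
    ∑ s', ∑ a', |stepDist P π μ s' a'| ≤ ∑ s, ∑ a, |μ s a| :=
  calc ∑ s', ∑ a', |stepDist P π μ s' a'| = ∑ s', |∑ s, ∑ a, μ s a * P s a s'| := by
        simp [stepDist, apply_ite, sum_ite_eq']
    _ ≤ ∑ s', ∑ s, ∑ a, |μ s a| * P s a s' := by
        gcongr with s'
        refine (abs_sum_le_sum_abs _ _).trans (sum_le_sum fun s _ => ?_)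
        refine (abs_sum_le_sum_abs _ _).trans_eq (sum_congr rfl fun a _ => ?_)
        rw [abs_mul, abs_of_nonneg ((hP s a).1 s')]
    _ = ∑ s, ∑ a, |μ s a| := by
        rw [sum_comm]
        refine sum_congr rfl fun s _ => ?_
        rw [sum_comm]
        simp only [← mul_sum, (hP _ _).2, mul_one]

lemma sum_abs_iterate_stepDist_le {P : S → A → S → ℝ} (hP : IsStochastic P) (π : S → A)
    (ν : S → A → ℝ) (t : ℕ) :
    ∑ s, ∑ a, |(stepDist P π)^[t] ν s a| ≤ ∑ s, ∑ a, |ν s a| := by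
  induction t with
  | zero => rfl
  | succ t ih =>
    rw [Function.iterate_succ_apply']
    exact (sum_abs_stepDist_le hP π _).trans ih

lemma summable_discounted_sum_mul {P : S → A → S → ℝ} (hP : IsStochastic P) {γ : ℝ} (hγ0 : 0 ≤ γ)
    (hγ1 : γ < 1) (π : S → A) (ν g : S → A → ℝ) :
    Summable fun t : ℕ => γ ^ t * ∑ s, ∑ a, (stepDist P π)^[t] ν s a * g s a := by
  refine .of_norm_bounded ((summable_geometric_of_lt_one hγ0 hγ1).mul_left
    ((∑ s, ∑ a, |ν s a|) * ‖g‖)) fun t => ?_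
  rw [norm_mul, norm_pow, Real.norm_of_nonneg hγ0, Real.norm_eq_abs, mul_comm]
  gcongr
  exact (abs_sum_mul_le _ g).trans
    (mul_le_mul_of_nonneg_right (sum_abs_iterate_stepDist_le hP π ν t) (norm_nonneg g))

noncomputable def stepDistₗ (P : S → A → S → ℝ) (π : S → A) : Module.End ℝ (S → A → ℝ) where
  toFun := stepDist P π
  map_add' μ ν := by
    ext s' a'
    simp only [stepDist, Pi.add_apply, add_mul, sum_add_distrib]
    split_ifs <;> simp
  map_smul' c μ := by
    ext s' a'
    simp [stepDist, mul_sum, mul_assoc]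

-- `vpi P R γ d0 π` and `Qpi P R γ π s a` are the discounted returns from `initDist d0 π` and
-- `pointMass s a`.
noncomputable def discountedReturn (P : S → A → S → ℝ) (R : S → A → ℝ) (γ : ℝ) (π : S → A)
    (ν : S → A → ℝ) : ℝ :=
  ∑' t : ℕ, γ ^ t * ∑ s, ∑ a, (stepDist P π)^[t] ν s a * R s a

lemma sum_initDist_mul (d0 : S → ℝ) (π : S → A) (g : S → A → ℝ) :
    ∑ s, ∑ a, initDist d0 π s a * g s a = ∑ s, d0 s * g s (π s) := by
  simp [initDist, ite_mul, sum_ite_eq']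

variable [DecidableEq S]

lemma sum_pointMass_mul (s0 : S) (a0 : A) (g : S → A → ℝ) :
    ∑ s, ∑ a, pointMass s0 a0 s a * g s a = g s0 a0 := by
  simp [pointMass, ite_and, sum_ite_eq']

lemma sum_smul_pointMass (ν : S → A → ℝ) : ∑ s, ∑ a, ν s a • pointMass s a = ν := by
  ext s' a'
  simp [pointMass, ite_and]

lemma apply_eq_sum_mul_apply_pointMass (f : (S → A → ℝ) →ₗ[ℝ] ℝ) (ν : S → A → ℝ) :
    f ν = ∑ s, ∑ a, ν s a * f (pointMass s a) := by
  conv_lhs => rw [← sum_smul_pointMass ν]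
  simp

lemma sum_iterate_stepDist_mul (P : S → A → S → ℝ) (π : S → A) (t : ℕ) (ν g : S → A → ℝ) :
    ∑ u, ∑ b, (stepDist P π)^[t] ν u b * g u b
      = ∑ s, ∑ a, ν s a * ∑ u, ∑ b, (stepDist P π)^[t] (pointMass s a) u b * g u b := by
  let pairing : (S → A → ℝ) →ₗ[ℝ] ℝ :=
    { toFun μ := ∑ u, ∑ b, μ u b * g u b
      map_add' μ ν := by simp [add_mul, sum_add_distrib]
      map_smul' c μ := by simp [mul_sum, mul_assoc] }
  simpa [pairing, stepDistₗ, Module.End.coe_pow] using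
    apply_eq_sum_mul_apply_pointMass (pairing ∘ₗ stepDistₗ P π ^ t) ν

lemma discountedReturn_eq_sum_mul_Qpi {P : S → A → S → ℝ} (hP : IsStochastic P) (R : S → A → ℝ)
    {γ : ℝ} (hγ0 : 0 ≤ γ) (hγ1 : γ < 1) (π : S → A) (ν : S → A → ℝ) :
    discountedReturn P R γ π ν = ∑ s, ∑ a, ν s a * Qpi P R γ π s a := by
  have hterm (t : ℕ) : γ ^ t * ∑ u, ∑ b, (stepDist P π)^[t] ν u b * R u b
      = ∑ s, ∑ a, ν s a * (γ ^ t * ∑ u, ∑ b, (stepDist P π)^[t] (pointMass s a) u b * R u b) := by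
    rw [sum_iterate_stepDist_mul, mul_sum]
    refine sum_congr rfl fun s _ => ?_
    rw [mul_sum]
    exact sum_congr rfl fun a _ => by ring
  have hsummable (s : S) (a : A) :=
    (summable_discounted_sum_mul hP hγ0 hγ1 π (pointMass s a) R).mul_left (ν s a)
  rw [discountedReturn, tsum_congr hterm,
    Summable.tsum_finsetSum fun s _ => summable_sum fun a _ => hsummable s a]
  refine sum_congr rfl fun s _ => ?_
  rw [Summable.tsum_finsetSum fun a _ => hsummable s a]
  exact sum_congr rfl fun a _ => tsum_mul_left

lemma Qpi_eq_add {P : S → A → S → ℝ} (hP : IsStochastic P) (R : S → A → ℝ)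
    {γ : ℝ} (hγ0 : 0 ≤ γ) (hγ1 : γ < 1) (π : S → A) (s0 : S) (a0 : A) :
    Qpi P R γ π s0 a0 = R s0 a0 + γ * ∑ s', P s0 a0 s' * Qpi P R γ π s' (π s') := by
  rw [Qpi, (summable_discounted_sum_mul hP hγ0 hγ1 π _ R).tsum_eq_zero_add]
  congr 1
  · simp [sum_pointMass_mul]
  · simp only [Function.iterate_succ_apply, pow_succ', mul_assoc, tsum_mul_left]
    change γ * discountedReturn P R γ π (stepDist P π (pointMass s0 a0)) = _
    rw [discountedReturn_eq_sum_mul_Qpi hP R hγ0 hγ1, sum_stepDist_mul]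
    simp [sum_pointMass_mul]

lemma sum_mul_Qpi_eq {P : S → A → S → ℝ} (hP : IsStochastic P) (R : S → A → ℝ)
    {γ : ℝ} (hγ0 : 0 ≤ γ) (hγ1 : γ < 1) (π π₀ : S → A) (μ : S → A → ℝ) :
    ∑ s, ∑ a, μ s a * Qpi P R γ π s a
      = ∑ s, ∑ a, μ s a * R s a + γ * ∑ s, ∑ a, stepDist P π₀ μ s a * Qpi P R γ π s (π s) := by
  have hpoint (s : S) (a : A) : μ s a * Qpi P R γ π s a
      = μ s a * R s a + γ * ∑ s', μ s a * P s a s' * Qpi P R γ π s' (π s') := by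
    rw [Qpi_eq_add hP R hγ0 hγ1, mul_add, mul_sum, mul_sum, mul_sum]
    simp only [mul_left_comm γ, mul_assoc]
  simp only [hpoint, sum_add_distrib, ← mul_sum, sum_stepDist_mul, sum_mul]
  congr 2
  exact (sum_congr rfl fun s _ => sum_comm).trans sum_comm

end

theorem stmt17_general {S A : Type*} [Fintype S] [Fintype A] [DecidableEq S] [DecidableEq A]
    (P : S → A → S → ℝ)
    (hP : ∀ s a, (∀ s', 0 ≤ P s a s') ∧ ∑ s', P s a s' = 1)
    (Rbar : S → A → ℝ)
    (γ : ℝ) (hγ0 : 0 ≤ γ) (hγ1 : γ < 1)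
    (d0 : S → ℝ)
    (π π' : S → A) :
    vpi P Rbar γ d0 π' - vpi P Rbar γ d0 π
      = ∑' t : ℕ, γ ^ t *
          ∑ s, ∑ a, ((stepDist P π)^[t] (initDist d0 π)) s a *
            (Qpi P Rbar γ π' s (π' s) - Qpi P Rbar γ π' s a) := by
  set ν : ℕ → S → A → ℝ := fun t => (stepDist P π)^[t] (initDist d0 π)
  set u : ℕ → ℝ := fun t => γ ^ t * ∑ s, ∑ a, ν t s a * Qpi P Rbar γ π' s (π' s)
  have hu : Summable u := summable_discounted_sum_mul hP hγ0 hγ1 π _ _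
  have hv : vpi P Rbar γ d0 π' = u 0 := by
    change discountedReturn P Rbar γ π' (initDist d0 π') = _
    simp [u, ν, discountedReturn_eq_sum_mul_Qpi hP Rbar hγ0 hγ1, sum_initDist_mul]
  have hterm (t : ℕ) : γ ^ t * ∑ s, ∑ a, ν t s a * (Qpi P Rbar γ π' s (π' s) - Qpi P Rbar γ π' s a)
      = u t - u (t + 1) - γ ^ t * ∑ s, ∑ a, ν t s a * Rbar s a := by
    simp only [mul_sub, sum_sub_distrib, sum_mul_Qpi_eq hP Rbar hγ0 hγ1 π' π, u, ν,
      Function.iterate_succ_apply', pow_succ]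
    ring
  rw [tsum_congr hterm, Summable.tsum_sub (hu.sub ((summable_nat_add_iff 1).mpr hu))
    (summable_discounted_sum_mul hP hγ0 hγ1 π _ _), tsum_sub_succ hu, hv]
  rfl

/-- Performance difference lemma (Kakade & Langford 2002, Lemma 6.1). -/
theorem stmt17 {S A : Type*} [Fintype S] [Fintype A] [DecidableEq S] [DecidableEq A]
    (P : S → A → S → ℝ)
    (hP : ∀ s a, (∀ s', 0 ≤ P s a s') ∧ ∑ s', P s a s' = 1)
    (Rmax : ℝ) (Rbar : S → A → ℝ)
    (hR : ∀ s a, 0 ≤ Rbar s a ∧ Rbar s a ≤ Rmax)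
    (γ : ℝ) (hγ0 : 0 ≤ γ) (hγ1 : γ < 1)
    (d0 : S → ℝ) (hd0 : ∀ s, 0 ≤ d0 s) (hd01 : ∑ s, d0 s = 1)
    (π π' : S → A) :
    vpi P Rbar γ d0 π' - vpi P Rbar γ d0 π
      = ∑' t : ℕ, γ ^ t *
          ∑ s, ∑ a, ((stepDist P π)^[t] (initDist d0 π)) s a *
            (Qpi P Rbar γ π' s (π' s) - Qpi P Rbar γ π' s a) :=
  stmt17_general P hP Rbar γ hγ0 hγ1 d0 π π'
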